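/- Let (X, μ) be a σ-finite measure space, let T > 0, let γ' : [0, T] → L²(X, μ; ℝ) be Bochner integrable, and let γ : [0, T] → L²(X, μ; ℝ) satisfy γ(t) = γ(0) + ∫₀ᵗ γ'(τ) dτ (Bochner integral in L²) for every t ∈ [0, T]. Choose for each t ∈ [0, T] a measurable representative of γ(t), and for 0 ≤ a ≤ b ≤ T let essVar(γ; a, b) denote an essential variation of γ over [a, b]. Then for almost every t ∈ [0, T]: as s → t with s ≠ t, the functions (1/|t − s|) · essVar(γ; min(s,t), max(s,t)) converge to |γ'(t)| strongly in L²(X, μ; ℝ). -/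

import Mathlib

/-!
In the Banach lattice `L²(X, μ)` the fundamental theorem of calculus gives
`|γ(b) - γ(a)| ≤ ∫_a^b |γ'|`, so every variation sum over a partition of `[a, b]` is
dominated by `∫_a^b |γ'|`, and by minimality so is the essential variation `V(a, b)`.
Hence `V(a, b)` lies in `L²` and is squeezed between `|γ(b) - γ(a)|` and `∫_a^b |γ'|`.
Comparing both bounds with `(b - a) |γ'(t)|` gives
`|V(a, b) - (b - a) |γ'(t)|| ≤ ∫_a^b |γ' - γ'(t)|` in the lattice order, and the norm of the
right-hand side is `o(b - a)` at every Lebesgue point `t` of `γ'`.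
-/

open MeasureTheory intervalIntegral Filter

/-- An essential supremum of a family `(v i)` of measurable functions from `X` to
`[-∞, ∞]` (with respect to `μ`). -/
def IsEssSupFamily {X : Type*} [MeasurableSpace X] (μ : Measure X) {I : Sort*}
    (v : I → X → EReal) (vbar : X → EReal) : Prop :=
  Measurable vbar ∧ (∀ i, ∀ᵐ x ∂μ, v i x ≤ vbar x) ∧
    ∀ w : X → EReal, Measurable w → (∀ i, ∀ᵐ x ∂μ, v i x ≤ w x) →
      ∀ᵐ x ∂μ, vbar x ≤ w x

/-- `V : X → [0, ∞]` is an essential variation of `γ` over the interval `[a, b]`: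
it is an essential supremum of the family of functions
`x ↦ ∑_{i=1}^{j} |γ(s_i; x) - γ(s_{i-1}; x)|`, indexed by all finite partitions
`a = s₀ < s₁ < ⋯ < s_j = b` of `[a, b]`. -/
def IsEssVariation {X : Type*} [MeasurableSpace X] (μ : Measure X)
    (γ : ℝ → X → ℝ) (a b : ℝ) (V : X → ENNReal) : Prop :=
  IsEssSupFamily μ
    (fun p : {p : ℕ × (ℕ → ℝ) // p.2 0 = a ∧ p.2 p.1 = b ∧ StrictMonoOn p.2 (Set.Iic p.1)} =>
      fun x =>
        ((∑ i ∈ Finset.range p.1.1, |γ (p.1.2 (i + 1)) x - γ (p.1.2 i) x| : ℝ) : EReal))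
    (fun x => (V x : EReal))

open Set Topology
open scoped ENNReal

section LatticeModule

variable {𝕜 M : Type*} [Field 𝕜] [LinearOrder 𝕜] [IsStrictOrderedRing 𝕜] [Lattice M]
  [AddCommGroup M] [IsOrderedAddMonoid M] [Module 𝕜 M] [PosSMulMono 𝕜 M]

theorem abs_smul_of_nonneg {a : 𝕜} (ha : 0 ≤ a) (b : M) : |a • b| = a • |b| := by
  have abs_smul_le : ∀ {a : 𝕜}, 0 ≤ a → ∀ b : M, |a • b| ≤ a • |b| := fun ha b =>
    abs_le'.2 ⟨smul_le_smul_of_nonneg_left (le_abs_self b) ha,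
      by rw [← smul_neg]; exact smul_le_smul_of_nonneg_left (neg_le_abs b) ha⟩
  rcases ha.eq_or_lt with rfl | ha
  · simp
  refine (abs_smul_le ha.le b).antisymm ?_
  calc a • |b| = a • |a⁻¹ • a • b| := by rw [inv_smul_smul₀ ha.ne']
    _ ≤ a • a⁻¹ • |a • b| :=
      smul_le_smul_of_nonneg_left (abs_smul_le (inv_nonneg.2 ha.le) _) ha.le
    _ = |a • b| := smul_inv_smul₀ ha.ne' _

end LatticeModule

theorem abs_sub_abs_le_of_abs_le_of_le_add {α : Type*} [Lattice α] [AddCommGroup α]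
    [IsOrderedAddMonoid α] {d v w c : α} (hd : |d| ≤ v) (hv : v ≤ w + |c|)
    (hdc : |d - c| ≤ w) : |(v - |c|)| ≤ w := by
  refine abs_le'.2 ⟨sub_le_iff_le_add.2 hv, ?_⟩
  calc -(v - |c|) = |c| - v := neg_sub v (|c|)
    _ ≤ |c| - |d| := sub_le_sub_left hd (|c|)
    _ ≤ |c - d| := (le_abs_self _).trans (abs_abs_sub_abs_le c d)
    _ ≤ w := abs_sub_comm c d ▸ hdc

namespace MeasureTheory.Lp

variable {X : Type*} [MeasurableSpace X] {μ : Measure X} {p : ℝ≥0∞}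

instance instIsOrderedModule {E : Type*} [NormedAddCommGroup E] [NormedSpace ℝ E]
    [PartialOrder E] [IsOrderedAddMonoid E] [IsOrderedModule ℝ E] [Fact (1 ≤ p)] :
    IsOrderedModule ℝ (Lp E p μ) :=
  IsOrderedModule.of_smul_nonneg fun a ha f hf => by
    rw [← Lp.coeFn_nonneg] at hf ⊢
    filter_upwards [hf, Lp.coeFn_smul a f] with x hx hax
    rw [hax]
    exact smul_nonneg ha hx

theorem coeFn_abs_sub_of_ae_eq {f g : Lp ℝ p μ} {f' g' : X → ℝ} (hf : f' =ᵐ[μ] f)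
    (hg : g' =ᵐ[μ] g) : ⇑|f - g| =ᵐ[μ] fun x => |f' x - g' x| := by
  filter_upwards [Lp.coeFn_abs (f - g), Lp.coeFn_sub f g, hf, hg] with x h1 h2 h3 h4
  rw [h1, h2, Pi.sub_apply, h3, h4]

end MeasureTheory.Lp

section BanachLattice

variable {α E : Type*} [MeasurableSpace α] {μ : Measure α} [NormedAddCommGroup E] [Lattice E]
  [HasSolidNorm E] [IsOrderedAddMonoid E] [NormedSpace ℝ E] [IsOrderedModule ℝ E]

theorem MeasureTheory.abs_integral_le_integral_abs_of_hasSolidNorm {f : α → E} :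
    |∫ x, f x ∂μ| ≤ ∫ x, |f x| ∂μ := by
  by_cases hf : Integrable f μ
  · refine abs_le'.2 ⟨integral_mono hf hf.abs fun x => le_abs_self _, ?_⟩
    rw [← MeasureTheory.integral_neg]
    exact integral_mono hf.neg hf.abs fun x => neg_le_abs _
  · rw [integral_undef hf, abs_zero]
    exact integral_nonneg fun x => abs_nonneg _

end BanachLattice

theorem MonotoneOn.apply_mem_Icc_of_le {α : Type*} [Preorder α] {σ : ℕ → α} {n i : ℕ}
    (hσ : MonotoneOn σ (Iic n)) (hi : i ≤ n) : σ i ∈ Icc (σ 0) (σ n) :=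
  ⟨hσ (mem_Iic.2 (Nat.zero_le n)) hi (Nat.zero_le i), hσ hi (mem_Iic.2 le_rfl) hi⟩

namespace IsEssVariation

variable {X : Type*} [MeasurableSpace X] {μ : Measure X} {p : ℝ≥0∞} {γrep : ℝ → X → ℝ}
  {γ : ℝ → Lp ℝ p μ} {a b : ℝ} {V : X → ℝ≥0∞}

theorem measurable_toReal (hV : IsEssVariation μ γrep a b V) :
    Measurable fun x => (V x).toReal := by
  simpa only [Function.comp_def, EReal.toReal_coe_ennreal] using
    measurable_ereal_toReal.comp hV.1

theorem ofReal_abs_sub_le (hV : IsEssVariation μ γrep a b V) (hab : a < b) :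
    ∀ᵐ x ∂μ, ENNReal.ofReal |γrep b x - γrep a x| ≤ V x := by
  have hσ : StrictMonoOn (fun i : ℕ => if i = 0 then a else b) (Iic 1) := by
    intro i _ j hj hij
    obtain rfl : i = 0 := by simp only [mem_Iic] at hj; omega
    simpa [Nat.pos_iff_ne_zero.1 hij] using hab
  filter_upwards [hV.2.1 ⟨(1, fun i => if i = 0 then a else b), rfl, rfl, hσ⟩] with x hx
  rw [← EReal.coe_ennreal_le_coe_ennreal_iff, EReal.coe_ennreal_ofReal,
    max_eq_left (abs_nonneg _)]
  simpa using hx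

theorem ae_le_of_forall_sum_le (hV : IsEssVariation μ γrep a b V) {w : X → ℝ}
    (hw : AEMeasurable w μ)
    (h : ∀ (n : ℕ) (σ : ℕ → ℝ), σ 0 = a → σ n = b → StrictMonoOn σ (Iic n) →
      ∀ᵐ x ∂μ, ∑ i ∈ Finset.range n, |γrep (σ (i + 1)) x - γrep (σ i) x| ≤ w x) :
    ∀ᵐ x ∂μ, V x ≠ ∞ ∧ (V x).toReal ≤ w x := by
  obtain ⟨w', hw'_meas, hww'⟩ := hw
  have hle := hV.2.2 (fun x => (w' x : EReal)) (measurable_coe_real_ereal.comp hw'_meas)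
    fun ⟨(n, σ), hσ0, hσn, hσ⟩ => by
      filter_upwards [h n σ hσ0 hσn hσ, hww'] with x hx hwx
      exact EReal.coe_le_coe_iff.2 (hwx ▸ hx)
  filter_upwards [hle, hww'] with x hx hwx
  have hV_ne_top : V x ≠ ∞ := by
    rintro hVx
    simp [hVx] at hx
  refine ⟨hV_ne_top, hwx ▸ ?_⟩
  rw [← EReal.toReal_coe_ennreal]
  exact EReal.toReal_le_toReal hx (by simp) (by simp)

theorem exists_Lp_abs_sub_le_le (hV : IsEssVariation μ γrep a b V) (hab : a < b)
    (hrep : ∀ t ∈ Icc a b, γrep t =ᵐ[μ] γ t) {W : Lp ℝ p μ}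
    (hW : ∀ (n : ℕ) (σ : ℕ → ℝ), σ 0 = a → σ n = b → StrictMonoOn σ (Iic n) →
      ∑ i ∈ Finset.range n, |γ (σ (i + 1)) - γ (σ i)| ≤ W) :
    ∃ v : Lp ℝ p μ, ⇑v =ᵐ[μ] (fun x => (V x).toReal) ∧ |γ b - γ a| ≤ v ∧ v ≤ W := by
  have hVW : ∀ᵐ x ∂μ, V x ≠ ∞ ∧ (V x).toReal ≤ W x := by
    refine hV.ae_le_of_forall_sum_le (Lp.aestronglyMeasurable W).aemeasurable
      fun n σ hσ0 hσn hσ => ?_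
    have hσab : ∀ i ≤ n, σ i ∈ Icc a b := fun i hi =>
      hσ0 ▸ hσn ▸ hσ.monotoneOn.apply_mem_Icc_of_le hi
    have hrep_σ : ∀ i ∈ Finset.range n, ⇑|γ (σ (i + 1)) - γ (σ i)|
        =ᵐ[μ] fun x => |γrep (σ (i + 1)) x - γrep (σ i) x| := fun i hi =>
      Lp.coeFn_abs_sub_of_ae_eq (hrep _ (hσab _ (Finset.mem_range.1 hi)))
        (hrep _ (hσab _ (Finset.mem_range.1 hi).le))
    filter_upwards [(Lp.coeFn_le _ _).2 (hW n σ hσ0 hσn hσ),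
      Lp.coeFn_fun_finsetSum (Finset.range n) fun i => |γ (σ (i + 1)) - γ (σ i)|,
      (Finset.range n).eventually_all.2 hrep_σ] with x hx hsum hσx
    rw [hsum] at hx
    rwa [Finset.sum_congr rfl hσx] at hx
  have hmem : MemLp (fun x => (V x).toReal) p μ :=
    (Lp.memLp W).of_le hV.measurable_toReal.aestronglyMeasurable <| by
      filter_upwards [hVW] with x hx
      rw [Real.norm_of_nonneg ENNReal.toReal_nonneg]
      exact hx.2.trans (le_abs_self _)
  refine ⟨hmem.toLp _, hmem.coeFn_toLp, ?_, ?_⟩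
  · rw [← Lp.coeFn_le]
    filter_upwards [Lp.coeFn_abs_sub_of_ae_eq (hrep b ⟨hab.le, le_rfl⟩)
      (hrep a ⟨le_rfl, hab.le⟩), hmem.coeFn_toLp, hV.ofReal_abs_sub_le hab, hVW]
      with x h1 h2 h3 h4
    rw [h1, h2]
    exact (ENNReal.ofReal_le_iff_le_toReal h4.1).1 h3
  · rw [← Lp.coeFn_le]
    filter_upwards [hmem.coeFn_toLp, hVW] with x h1 h2
    exact h1 ▸ h2.2

end IsEssVariation

theorem sub_eq_intervalIntegral_of_eq_add_integral {E : Type*} [NormedAddCommGroup E]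
    [NormedSpace ℝ E] {T : ℝ} {γ γ' : ℝ → E} (hint : IntegrableOn γ' (Icc 0 T))
    (hγ : ∀ t ∈ Icc 0 T, γ t = γ 0 + ∫ τ in (0 : ℝ)..t, γ' τ) {a b : ℝ} (ha : a ∈ Icc 0 T)
    (hb : b ∈ Icc 0 T) : γ b - γ a = ∫ τ in a..b, γ' τ := by
  have h0 : (0 : ℝ) ∈ Icc 0 T := ⟨le_rfl, ha.1.trans ha.2⟩
  rw [hγ b hb, hγ a ha, add_sub_add_left_eq_sub, integral_interval_sub_left
    (hint.mono_set (uIcc_subset_Icc h0 hb)).intervalIntegrable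
    (hint.mono_set (uIcc_subset_Icc h0 ha)).intervalIntegrable]

section AbsolutelyContinuous

variable {E : Type*} [NormedAddCommGroup E] [Lattice E] [HasSolidNorm E]
  [IsOrderedAddMonoid E] [NormedSpace ℝ E] [IsOrderedModule ℝ E] {T : ℝ} {γ γ' : ℝ → E}

theorem intervalIntegral.abs_integral_le_integral_abs_of_hasSolidNorm {f : ℝ → E} {a b : ℝ}
    (hab : a ≤ b) : |∫ τ in a..b, f τ| ≤ ∫ τ in a..b, |f τ| := by
  simpa only [intervalIntegral.integral_of_le hab] using
    MeasureTheory.abs_integral_le_integral_abs_of_hasSolidNorm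

theorem abs_sub_le_intervalIntegral_abs (hint : IntegrableOn γ' (Icc 0 T))
    (hγ : ∀ t ∈ Icc 0 T, γ t = γ 0 + ∫ τ in (0 : ℝ)..t, γ' τ) {a b : ℝ} (ha : a ∈ Icc 0 T)
    (hb : b ∈ Icc 0 T) (hab : a ≤ b) : |γ b - γ a| ≤ ∫ τ in a..b, |γ' τ| :=
  sub_eq_intervalIntegral_of_eq_add_integral hint hγ ha hb ▸
    intervalIntegral.abs_integral_le_integral_abs_of_hasSolidNorm hab

theorem sum_abs_sub_le_intervalIntegral_abs (hint : IntegrableOn γ' (Icc 0 T))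
    (hγ : ∀ t ∈ Icc 0 T, γ t = γ 0 + ∫ τ in (0 : ℝ)..t, γ' τ) {n : ℕ} {σ : ℕ → ℝ}
    (hσ : MonotoneOn σ (Iic n)) (h0 : 0 ≤ σ 0) (hT : σ n ≤ T) :
    ∑ i ∈ Finset.range n, |γ (σ (i + 1)) - γ (σ i)| ≤ ∫ τ in σ 0..σ n, |γ' τ| := by
  have hσT : ∀ i ≤ n, σ i ∈ Icc 0 T := fun i hi =>
    Icc_subset_Icc h0 hT (hσ.apply_mem_Icc_of_le hi)
  have hint_abs : IntegrableOn (fun τ => |γ' τ|) (Icc 0 T) := hint.abs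
  rw [← sum_integral_adjacent_intervals fun i hi =>
    (hint_abs.mono_set (uIcc_subset_Icc (hσT i hi.le) (hσT (i + 1) hi))).intervalIntegrable]
  refine Finset.sum_le_sum fun i hi => ?_
  have hi := Finset.mem_range.1 hi
  exact abs_sub_le_intervalIntegral_abs hint hγ (hσT i hi.le) (hσT (i + 1) hi)
    (hσ (mem_Iic.2 hi.le) (mem_Iic.2 hi) i.le_succ)

variable [CompleteSpace E]

theorem abs_sub_sub_smul_le_intervalIntegral_abs_sub (hint : IntegrableOn γ' (Icc 0 T))
    (hγ : ∀ t ∈ Icc 0 T, γ t = γ 0 + ∫ τ in (0 : ℝ)..t, γ' τ) {a b : ℝ} (ha : a ∈ Icc 0 T)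
    (hb : b ∈ Icc 0 T) (hab : a ≤ b) (c : E) :
    |γ b - γ a - (b - a) • c| ≤ ∫ τ in a..b, |γ' τ - c| := by
  rw [sub_eq_intervalIntegral_of_eq_add_integral hint hγ ha hb,
    ← intervalIntegral.integral_const, ← intervalIntegral.integral_sub
      (hint.mono_set (uIcc_subset_Icc ha hb)).intervalIntegrable intervalIntegrable_const]
  exact intervalIntegral.abs_integral_le_integral_abs_of_hasSolidNorm hab

theorem intervalIntegral.integral_abs_le_integral_abs_sub_add {f : ℝ → E} {a b : ℝ} (hab : a ≤ b)
    (hf : IntervalIntegrable f volume a b) (c : E) :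
    ∫ τ in a..b, |f τ| ≤ (∫ τ in a..b, |f τ - c|) + (b - a) • |c| := by
  have hfc : IntervalIntegrable (fun τ => |f τ - c|) volume a b :=
    have hf' := hf.sub (intervalIntegrable_const (c := c))
    ⟨hf'.1.abs, hf'.2.abs⟩
  rw [← intervalIntegral.integral_const,
    ← intervalIntegral.integral_add hfc intervalIntegrable_const]
  simp only [intervalIntegral.integral_of_le hab]
  exact MeasureTheory.integral_mono hf.1.abs (hfc.1.add (integrable_const c).abs) fun τ => by
    simpa using abs_add_le (f τ - c) c

end AbsolutelyContinuous

theorem inv_abs_sub_mul_integral_Ioc_le_two_mul_average {φ : ℝ → ℝ} {s t : ℝ} (hst : s ≠ t)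
    (hφ : 0 ≤ φ) (hφi : IntegrableOn φ (Metric.closedBall t |t - s|)) :
    |t - s|⁻¹ * ∫ τ in Ioc (min s t) (max s t), φ τ
      ≤ 2 * ⨍ τ in Metric.closedBall t |t - s|, φ τ := by
  have hr : 0 < |t - s| := abs_pos.2 (sub_ne_zero.2 hst.symm)
  have hsub : Ioc (min s t) (max s t) ⊆ Metric.closedBall t |t - s| := fun τ hτ => by
    rw [Metric.mem_closedBall, Real.dist_eq, abs_sub_comm]
    exact abs_sub_right_of_mem_uIcc (Ioc_subset_Icc_self hτ)
  calc |t - s|⁻¹ * ∫ τ in Ioc (min s t) (max s t), φ τ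
      ≤ |t - s|⁻¹ * ∫ τ in Metric.closedBall t |t - s|, φ τ :=
        mul_le_mul_of_nonneg_left (setIntegral_mono_set hφi (ae_of_all _ hφ)
          hsub.eventuallyLE) (inv_nonneg.2 hr.le)
    _ = 2 * ⨍ τ in Metric.closedBall t |t - s|, φ τ := by
        rw [setAverage_eq, Real.volume_real_closedBall hr.le, smul_eq_mul]
        field_simp

theorem MeasureTheory.IntegrableOn.ae_tendsto_inv_abs_sub_mul_integral_norm_sub
    {E : Type*} [NormedAddCommGroup E] {f : ℝ → E} {a b : ℝ} (hf : IntegrableOn f (Icc a b)) :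
    ∀ᵐ t ∂volume.restrict (Icc a b),
      Tendsto (fun s => |t - s|⁻¹ * ∫ τ in Ioc (min s t) (max s t), ‖f τ - f t‖)
        (𝓝[Icc a b \ {t}] t) (𝓝 0) := by
  set g := (Icc a b).indicator f
  have hg : Integrable g := (integrable_indicator_iff measurableSet_Icc).2 hf
  filter_upwards [ae_restrict_of_ae (IsUnifLocDoublingMeasure.ae_tendsto_average_norm_sub
    volume hg.locallyIntegrable 1), ae_restrict_mem measurableSet_Icc] with t ht htI
  have hδ : Tendsto (fun s => |t - s|) (𝓝[Icc a b \ {t}] t) (𝓝[>] 0) := by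
    refine tendsto_nhdsWithin_iff.2 ⟨?_, ?_⟩
    · exact ((continuous_const.sub continuous_id).abs.tendsto' t 0 (by simp)).mono_left
        nhdsWithin_le_nhds
    · filter_upwards [self_mem_nhdsWithin] with s hs
      exact abs_pos.2 (sub_ne_zero.2 (Ne.symm hs.2))
  have havg := (ht (fun _ => t) _ hδ (Eventually.of_forall fun s =>
    Metric.mem_closedBall_self (by positivity))).const_mul 2
  rw [mul_zero] at havg
  refine tendsto_of_tendsto_of_tendsto_of_le_of_le' tendsto_const_nhds havg
    (Eventually.of_forall fun s => by positivity) ?_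
  filter_upwards [self_mem_nhdsWithin] with s ⟨hs, hst⟩
  have hfg : ∫ τ in Ioc (min s t) (max s t), ‖f τ - f t‖
      = ∫ τ in Ioc (min s t) (max s t), ‖g τ - g t‖ :=
    setIntegral_congr_fun measurableSet_Ioc fun τ hτ => by
      simp only [g, indicator_of_mem htI,
        indicator_of_mem (ordConnected_Icc.uIcc_subset hs htI (Ioc_subset_Icc_self hτ))]
  rw [hfg]
  exact inv_abs_sub_mul_integral_Ioc_le_two_mul_average hst (fun _ => norm_nonneg _)
    (hg.integrableOn.sub (integrableOn_const measure_closedBall_lt_top.ne)).norm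

section EssVariationEstimate

variable {X : Type*} [MeasurableSpace X] {μ : Measure X} {p : ℝ≥0∞} [Fact (1 ≤ p)] {T : ℝ}
  {γ γ' : ℝ → Lp ℝ p μ} {γrep : ℝ → X → ℝ}

theorem eLpNorm_inv_mul_toReal_sub_abs_le (hint : IntegrableOn γ' (Icc 0 T))
    (hγ : ∀ t ∈ Icc 0 T, γ t = γ 0 + ∫ τ in (0 : ℝ)..t, γ' τ)
    (hrep : ∀ t ∈ Icc 0 T, γrep t =ᵐ[μ] γ t) {a b : ℝ} {V : X → ℝ≥0∞}
    (hV : IsEssVariation μ γrep a b V) (ha : 0 ≤ a) (hab : a < b) (hb : b ≤ T)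
    (c : Lp ℝ p μ) :
    eLpNorm (fun x => (b - a)⁻¹ * (V x).toReal - |c x|) p μ
      ≤ ENNReal.ofReal ((b - a)⁻¹ * ∫ τ in Ioc a b, ‖γ' τ - c‖) := by
  have haT : a ∈ Icc 0 T := ⟨ha, hab.le.trans hb⟩
  have hbT : b ∈ Icc 0 T := ⟨ha.trans hab.le, hb⟩
  have hh : 0 < b - a := sub_pos.2 hab
  obtain ⟨v, hv, hγv, hvW⟩ := hV.exists_Lp_abs_sub_le_le hab
    (fun t ht => hrep t (Icc_subset_Icc ha hb ht)) fun n σ hσ0 hσn hσ => hσ0 ▸ hσn ▸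
      sum_abs_sub_le_intervalIntegral_abs hint hγ hσ.monotoneOn (hσ0 ▸ ha) (hσn ▸ hb)
  have hv_dev : |(v - |(b - a) • c|)| ≤ ∫ τ in a..b, |γ' τ - c| := by
    refine abs_sub_abs_le_of_abs_le_of_le_add hγv (hvW.trans ?_)
      (abs_sub_sub_smul_le_intervalIntegral_abs_sub hint hγ haT hbT hab.le c)
    rw [abs_smul_of_nonneg hh.le c]
    exact intervalIntegral.integral_abs_le_integral_abs_sub_add hab.le
      (hint.mono_set (uIcc_subset_Icc haT hbT)).intervalIntegrable c
  rw [abs_smul_of_nonneg hh.le c] at hv_dev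
  have hdev_nonneg : 0 ≤ ∫ τ in a..b, |γ' τ - c| := by
    rw [intervalIntegral.integral_of_le hab.le]
    exact integral_nonneg fun _ => abs_nonneg _
  have hdev_norm : ‖∫ τ in a..b, |γ' τ - c|‖ ≤ ∫ τ in Ioc a b, ‖γ' τ - c‖ := by
    simpa only [norm_abs_eq_norm, intervalIntegral.integral_of_le hab.le] using
      intervalIntegral.norm_integral_le_integral_norm (f := fun τ => |γ' τ - c|) hab.le
  have hae : (fun x => (b - a)⁻¹ * (V x).toReal - |c x|)
      =ᵐ[μ] ⇑((b - a)⁻¹ • (v - (b - a) • |c|)) := by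
    filter_upwards [Lp.coeFn_smul (b - a)⁻¹ (v - (b - a) • |c|),
      Lp.coeFn_sub v ((b - a) • |c|), Lp.coeFn_smul (b - a) |c|, Lp.coeFn_abs c, hv]
      with x h1 h2 h3 h4 h5
    simp only [h1, h2, h3, h4, h5, Pi.smul_apply, Pi.sub_apply, smul_eq_mul]
    field_simp
  calc eLpNorm (fun x => (b - a)⁻¹ * (V x).toReal - |c x|) p μ
      = ENNReal.ofReal ((b - a)⁻¹ * ‖v - (b - a) • |c|‖) := by
        rw [eLpNorm_congr_ae hae, ← Lp.enorm_def, ← ofReal_norm, norm_smul,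
          Real.norm_of_nonneg (inv_nonneg.2 hh.le)]
    _ ≤ ENNReal.ofReal ((b - a)⁻¹ * ∫ τ in Ioc a b, ‖γ' τ - c‖) := by
        refine ENNReal.ofReal_le_ofReal (mul_le_mul_of_nonneg_left ?_ (inv_nonneg.2 hh.le))
        exact (norm_le_norm_of_abs_le_abs (hv_dev.trans_eq (abs_of_nonneg hdev_nonneg).symm)).trans
          hdev_norm

end EssVariationEstimate

theorem essVariation_deriv_ae_general {X : Type*} [MeasurableSpace X] (μ : Measure X)
    (T : ℝ)
    (γ γ' : ℝ → Lp ℝ 2 μ)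
    (hint : IntegrableOn γ' (Set.Icc 0 T))
    (hγ : ∀ t ∈ Set.Icc (0 : ℝ) T, γ t = γ 0 + ∫ τ in (0 : ℝ)..t, γ' τ)
    (γrep : ℝ → X → ℝ)
    (hrep : ∀ t ∈ Set.Icc (0 : ℝ) T, Measurable (γrep t) ∧ γrep t =ᵐ[μ] γ t)
    (V : ℝ → ℝ → X → ENNReal)
    (hV : ∀ a b, 0 ≤ a → a ≤ b → b ≤ T → IsEssVariation μ γrep a b (V a b)) :
    ∀ᵐ t ∂(volume.restrict (Set.Icc (0 : ℝ) T)),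
      Tendsto
        (fun s => eLpNorm
          (fun x => (1 / |t - s|) * (V (min s t) (max s t) x).toReal - |(γ' t : X → ℝ) x|)
          2 μ)
        (nhdsWithin t (Set.Icc (0 : ℝ) T \ {t})) (nhds 0) := by
  filter_upwards [hint.ae_tendsto_inv_abs_sub_mul_integral_norm_sub,
    ae_restrict_mem measurableSet_Icc] with t hleb htT
  refine tendsto_of_tendsto_of_tendsto_of_le_of_le' tendsto_const_nhds
    (ENNReal.ofReal_zero ▸ ENNReal.tendsto_ofReal hleb) (Eventually.of_forall fun _ => zero_le)
    ?_
  filter_upwards [self_mem_nhdsWithin] with s ⟨hsT, hst⟩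
  have ha : 0 ≤ min s t := le_min hsT.1 htT.1
  have hb : max s t ≤ T := max_le hsT.2 htT.2
  rw [one_div, ← max_sub_min_eq_abs]
  exact eLpNorm_inv_mul_toReal_sub_abs_le hint hγ (fun t ht => (hrep t ht).2)
    (hV _ _ ha min_le_max hb) ha (min_lt_max.2 hst) hb (γ' t)

/-- If `γ : [0, T] → L²(X, μ)` is absolutely continuous with Bochner integrable derivative
`γ'`, `γrep t` is a measurable representative of `γ t` for `t ∈ [0, T]`, and
`V a b` is an essential variation of `γrep` over `[a, b]` for all `0 ≤ a ≤ b ≤ T`, then for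
a.e. `t ∈ [0, T]`: as `s → t` with `s ≠ t` in `[0, T]`, the functions
`(1/|t - s|) · essVar(γ; min(s,t), max(s,t))` converge to `|γ'(t)|` strongly in `L²(X, μ)`. -/
theorem essVariation_deriv_ae {X : Type*} [MeasurableSpace X] (μ : Measure X)
    [SigmaFinite μ] (T : ℝ) (hT : 0 < T)
    (γ γ' : ℝ → Lp ℝ 2 μ)
    (hint : IntegrableOn γ' (Set.Icc 0 T))
    (hγ : ∀ t ∈ Set.Icc (0 : ℝ) T, γ t = γ 0 + ∫ τ in (0 : ℝ)..t, γ' τ)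
    (γrep : ℝ → X → ℝ)
    (hrep : ∀ t ∈ Set.Icc (0 : ℝ) T, Measurable (γrep t) ∧ γrep t =ᵐ[μ] γ t)
    (V : ℝ → ℝ → X → ENNReal)
    (hV : ∀ a b, 0 ≤ a → a ≤ b → b ≤ T → IsEssVariation μ γrep a b (V a b)) :
    ∀ᵐ t ∂(volume.restrict (Set.Icc (0 : ℝ) T)),
      Tendsto
        (fun s => eLpNorm
          (fun x => (1 / |t - s|) * (V (min s t) (max s t) x).toReal - |(γ' t : X → ℝ) x|)
          2 μ)
        (nhdsWithin t (Set.Icc (0 : ℝ) T \ {t})) (nhds 0) :=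
  essVariation_deriv_ae_general μ T γ γ' hint hγ γrep hrep V hV
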